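/- Let (X, σ) be a minimal subshift, m as in the disjointness lemma (m ≥ max{(R_x(4)−1)/2, 5}), and U an m-cylinder of X such that σ^i(U), −2 ≤ i ≤ 2, are pairwise disjoint. Then the subgroup Δ_U = ⟨f_{σ^{−1}(U)}, f_U, f_{σ(U)}⟩ of ⟦σ⟧′ is isomorphic to the alternating group Alt(5), and every element of Δ_U is supported on the union of σ^i(U) for −2 ≤ i ≤ 2. -/

import Mathlib

/-- The set of `n`-factors of a two-sided infinite word `w`. -/
def factorsZ {A : Type*} (w : ℤ → A) (n : ℕ) : Set (Fin n → A) :=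
  {u | ∃ k : ℤ, ∀ i : Fin n, u i = w (k + (i : ℤ))}

/-- The complexity function of a two-sided infinite word. -/
noncomputable def complexityZ {A : Type*} (w : ℤ → A) (n : ℕ) : ℕ :=
  Nat.card (factorsZ w n)

/-- `u` occurs in the length-`M` window of `w` starting at `k`. -/
def OccursIn {A : Type*} (w : ℤ → A) {n : ℕ} (u : Fin n → A) (k : ℤ) (M : ℕ) : Prop :=
  ∃ j : ℤ, k ≤ j ∧ j + (n : ℤ) ≤ k + (M : ℤ) ∧ ∀ i : Fin n, u i = w (j + (i : ℤ))

/-- `M` is a recurrence bound for length-`n` factors of `w`. -/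
def IsRecurrenceBound {A : Type*} (w : ℤ → A) (n M : ℕ) : Prop :=
  ∀ u ∈ factorsZ w n, ∀ k : ℤ, OccursIn w u k M

def UniformlyRecurrent {A : Type*} (w : ℤ → A) : Prop :=
  ∀ n : ℕ, ∃ M : ℕ, IsRecurrenceBound w n M

/-- The recurrence function of `w`. -/
noncomputable def recurrenceFn {A : Type*} (w : ℤ → A) (n : ℕ) : ℕ :=
  sInf {M | IsRecurrenceBound w n M}

def PeriodicWord {A : Type*} (w : ℤ → A) : Prop :=
  ∃ k : ℤ, 1 ≤ k ∧ ∀ i : ℤ, w (i + k) = w i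

/-- The `i`-th power of the shift: `(shiftFun i y) t = y (t + i)`. -/
def shiftFun {A : Type*} (i : ℤ) (y : ℤ → A) : ℤ → A := fun t => y (t + i)

/-- Image of a set of words under the `i`-th power of the shift. -/
def shiftSet {A : Type*} (i : ℤ) (W : Set (ℤ → A)) : Set (ℤ → A) := shiftFun i '' W

def cylC {A : Type*} (m : ℕ) (u : Fin (2 * m + 1) → A) : Set (ℤ → A) :=
  {y | ∀ i : Fin (2 * m + 1), y ((i : ℤ) - (m : ℤ)) = u i}

def IsMCylinder {A : Type*} (X : Set (ℤ → A)) (m : ℕ) (U : Set (ℤ → A)) : Prop :=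
  (∃ u : Fin (2 * m + 1) → A, U = X ∩ cylC m u) ∧ U.Nonempty
/-- The group of self-homeomorphisms of a space, under composition
(`(g * h) x = g (h x)`). -/
instance homeomorphGroup {Y : Type*} [TopologicalSpace Y] : Group (Y ≃ₜ Y) where
  mul g h := h.trans g
  one := Homeomorph.refl Y
  inv := Homeomorph.symm
  mul_assoc _ _ _ := Homeomorph.ext fun _ => rfl
  one_mul _ := Homeomorph.ext fun _ => rfl
  mul_one _ := Homeomorph.ext fun _ => rfl
  inv_mul_cancel g := Homeomorph.ext fun y => g.symm_apply_apply y

def InFullGroup {A : Type*} [TopologicalSpace A] (X : Set (ℤ → A)) (g : ↥X ≃ₜ ↥X) : Prop :=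
  ∃ f : ↥X → ℤ, Continuous f ∧ ∀ p : ↥X, ((g p : ℤ → A)) = shiftFun (f p) (p : ℤ → A)

/-- `g` is the homeomorphism `f_W`: it acts as `σ` on `W ∪ σ⁻¹(W)`, as `σ⁻²` on `σ(W)`,
and as the identity elsewhere. -/
def IsFOn {A : Type*} [TopologicalSpace A] (X W : Set (ℤ → A)) (g : ↥X ≃ₜ ↥X) : Prop :=
  ∀ p : ↥X,
    ((p : ℤ → A) ∈ W ∪ shiftSet (-1) W → ((g p : ℤ → A)) = shiftFun 1 (p : ℤ → A)) ∧
    ((p : ℤ → A) ∈ shiftSet 1 W → ((g p : ℤ → A)) = shiftFun (-2) (p : ℤ → A)) ∧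
    ((p : ℤ → A) ∉ W ∪ shiftSet (-1) W ∪ shiftSet 1 W → g p = p)

/-! Index the five levels `σ^i(U)`, `-2 ≤ i ≤ 2`, by `Fin 5`. Because the levels are pairwise
disjoint and nonempty, the pairs `(g, π)` where `g` carries each level `i` onto the level `π i` by
a power of the shift and fixes the rest of `X` form a subgroup of `Homeo(X) × Sym(5)` on which both
projections are injective. Hence `Δ_U` is isomorphic to the group generated by the permutations of
its generators, the 3-cycles `(0 1 2)`, `(1 2 3)`, `(2 3 4)`. These generate a subgroup of `Alt(5)`
whose order is divisible by `2 · 3 · 5`, so all of `Alt(5)`: being simple, `Alt(5)` has no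
subgroup of index 2. -/

open Equiv Function Set Subgroup

section Shift

variable {A : Type*}

theorem shiftFun_shiftFun (a b : ℤ) (y : ℤ → A) :
    shiftFun a (shiftFun b y) = shiftFun (a + b) y := by
  funext t
  simp only [shiftFun, add_assoc]

theorem shiftFun_zero (y : ℤ → A) : shiftFun 0 y = y := by
  funext t
  simp only [shiftFun, add_zero]

theorem shiftSet_shiftSet (a b : ℤ) (W : Set (ℤ → A)) :
    shiftSet a (shiftSet b W) = shiftSet (a + b) W := by
  simp only [shiftSet, image_image, shiftFun_shiftFun]

theorem shiftSet_zero (W : Set (ℤ → A)) : shiftSet 0 W = W := by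
  simp only [shiftSet, shiftFun_zero, image_id']

theorem mapsTo_shiftFun_closure_orbit [TopologicalSpace A] (x : ℤ → A) (i : ℤ) :
    MapsTo (shiftFun i) (closure (range fun n : ℤ => shiftFun n x))
      (closure (range fun n : ℤ => shiftFun n x)) := by
  refine MapsTo.closure ?_ (continuous_pi fun t => continuous_apply (t + i))
  rintro _ ⟨n, rfl⟩
  exact ⟨i + n, (shiftFun_shiftFun i n x).symm⟩

end Shift

theorem Subgroup.nonempty_mulEquiv_closure_range_comp {G N κ : Type*} [Group G] [Group N]
    (f : G →* N) (v : κ → G) (hf : InjOn f (closure (range v))) :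
    Nonempty (closure (range v) ≃* closure (range (f ∘ v))) := by
  have hinj : Injective (f.domRestrict (closure (range v))) :=
    fun a b hab => Subtype.ext (hf a.2 b.2 hab)
  refine ⟨(MonoidHom.ofInjective hinj).trans (MulEquiv.subgroupCongr ?_)⟩
  rw [MonoidHom.domRestrict_range, MonoidHom.map_closure, range_comp]

theorem alternatingGroup_five_index_ne_two (H : Subgroup (alternatingGroup (Fin 5))) :
    H.index ≠ 2 := by
  intro h2
  rcases (H.normal_of_index_eq_two h2).eq_bot_or_eq_top with rfl | rfl
  · rw [index_bot, nat_card_alternatingGroup, Nat.card_fin] at h2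
    exact absurd h2 (by decide)
  · exact absurd h2 (by simp)

theorem eq_alternatingGroup_five_of_le {H : Subgroup (Perm (Fin 5))}
    (hle : H ≤ alternatingGroup (Fin 5)) (h30 : 30 ∣ Nat.card H) :
    H = alternatingGroup (Fin 5) := by
  obtain ⟨k, hk⟩ := h30
  have hrel : H.relIndex (alternatingGroup (Fin 5)) * k = 2 := by
    have h := H.index_mul_card
    rw [← relIndex_mul_index hle, alternatingGroup.index_eq_two, Nat.card_perm, Nat.card_fin,
      hk] at h
    have h120 : Nat.factorial 5 = 120 := rfl
    linarith
  rcases (Nat.dvd_prime Nat.prime_two).mp (Dvd.intro k hrel) with h1 | h2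
  · exact le_antisymm hle (relIndex_eq_one.mp h1)
  · exact absurd h2 (alternatingGroup_five_index_ne_two _)

set_option maxRecDepth 4000 in
theorem closure_threeCycles_eq_alternatingGroup_five :
    closure {c[0, 1, 2], c[1, 2, 3], c[2, 3, 4]} = alternatingGroup (Fin 5) := by
  set H := closure {(c[0, 1, 2] : Perm (Fin 5)), c[1, 2, 3], c[2, 3, 4]}
  have ha : c[0, 1, 2] ∈ H := subset_closure (by simp)
  have hb : c[1, 2, 3] ∈ H := subset_closure (by simp)
  have hc : c[2, 3, 4] ∈ H := subset_closure (by simp)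
  have hdvd {p : ℕ} [Fact p.Prime] {g : Perm (Fin 5)} (hg : g ∈ H) (hp : g ^ p = 1)
      (h1 : g ≠ 1) : p ∣ Nat.card H :=
    orderOf_eq_prime hp h1 ▸ H.orderOf_dvd_natCard hg
  have : Fact (Nat.Prime 3) := ⟨by norm_num⟩
  have : Fact (Nat.Prime 5) := ⟨by norm_num⟩
  have h2 := hdvd (p := 2) (mul_mem ha hb) (by decide) (by decide)
  have h3 := hdvd (p := 3) ha (by decide) (by decide)
  have h5 := hdvd (p := 5) (mul_mem ha hc) (by decide) (by decide)
  refine eq_alternatingGroup_five_of_le ?_ ?_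
  · rw [closure_le]
    rintro g (rfl | rfl | rfl) <;> exact Perm.mem_alternatingGroup.mpr (by decide)
  · exact Nat.Coprime.mul_dvd_of_dvd_of_dvd (by norm_num)
      (Nat.Coprime.mul_dvd_of_dvd_of_dvd (by norm_num) h2 h3) h5

section PermutesLevels

variable {A ι : Type*} [TopologicalSpace A] {X U : Set (ℤ → A)} {ℓ : ι → ℤ}

def PermutesLevels (X U : Set (ℤ → A)) (ℓ : ι → ℤ) (g : X ≃ₜ X) (π : Perm ι) : Prop :=
  (∀ i (p : X), (p : ℤ → A) ∈ shiftSet (ℓ i) U →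
      (g p : ℤ → A) = shiftFun (ℓ (π i) - ℓ i) p) ∧
  ∀ p : X, (∀ i, (p : ℤ → A) ∉ shiftSet (ℓ i) U) → g p = p

namespace PermutesLevels

theorem mapsTo {g : X ≃ₜ X} {π : Perm ι} (h : PermutesLevels X U ℓ g π) {i : ι} {p : X}
    (hp : (p : ℤ → A) ∈ shiftSet (ℓ i) U) : (g p : ℤ → A) ∈ shiftSet (ℓ (π i)) U := by
  obtain ⟨u, hu, hpu⟩ := hp
  refine ⟨u, hu, ?_⟩
  rw [h.1 i p ⟨u, hu, hpu⟩, ← hpu, shiftFun_shiftFun, sub_add_cancel]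

theorem one : PermutesLevels X U ℓ 1 1 :=
  ⟨fun i p _ => by rw [Perm.one_apply, sub_self, shiftFun_zero]; rfl, fun _ _ => rfl⟩

theorem mul {g h : X ≃ₜ X} {π τ : Perm ι} (hg : PermutesLevels X U ℓ g π)
    (hh : PermutesLevels X U ℓ h τ) : PermutesLevels X U ℓ (g * h) (π * τ) := by
  refine ⟨fun i p hp => ?_, fun p hp => ?_⟩
  · change (g (h p) : ℤ → A) = _
    rw [hg.1 (τ i) (h p) (hh.mapsTo hp), hh.1 i p hp, shiftFun_shiftFun, Perm.mul_apply,
      sub_add_sub_cancel]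
  · change g (h p) = p
    rw [hh.2 p hp, hg.2 p hp]

theorem inv (hd : Pairwise (Disjoint on fun i => shiftSet (ℓ i) U)) {g : X ≃ₜ X} {π : Perm ι}
    (hg : PermutesLevels X U ℓ g π) : PermutesLevels X U ℓ g⁻¹ π⁻¹ := by
  have hgq (p : X) : g (g⁻¹ p) = p := g.apply_symm_apply p
  -- otherwise `g` fixes `g⁻¹ p`, which is then `p`
  have hlevel (p : X) (i : ι) (hp : (p : ℤ → A) ∈ shiftSet (ℓ i) U) :
      ∃ j, ((g⁻¹ p : X) : ℤ → A) ∈ shiftSet (ℓ j) U := by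
    by_contra! hq
    exact hq i (by rwa [← hg.2 _ hq, hgq])
  refine ⟨fun i p hp => ?_, fun p hp => ?_⟩
  · obtain ⟨j, hj⟩ := hlevel p i hp
    have hij : π j = i := hd.eq (not_disjoint_iff.mpr ⟨p, hgq p ▸ hg.mapsTo hj, hp⟩)
    have hgj := hg.1 j _ hj
    rw [hgq] at hgj
    subst hij
    rw [(Perm.inv_eq_iff_eq.mpr rfl : π⁻¹ (π j) = j), hgj, shiftFun_shiftFun,
      sub_add_sub_cancel, sub_self, shiftFun_zero]
  · by_cases hq : ∃ j, ((g⁻¹ p : X) : ℤ → A) ∈ shiftSet (ℓ j) U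
    · obtain ⟨j, hj⟩ := hq
      exact absurd (hgq p ▸ hg.mapsTo hj) (hp _)
    · push Not at hq
      rw [← hg.2 _ hq, hgq]

theorem perm_eq (hd : Pairwise (Disjoint on fun i => shiftSet (ℓ i) U))
    (hne : ∀ i, ∃ p : X, (p : ℤ → A) ∈ shiftSet (ℓ i) U) {g : X ≃ₜ X} {π τ : Perm ι}
    (hπ : PermutesLevels X U ℓ g π) (hτ : PermutesLevels X U ℓ g τ) : π = τ := by
  ext i
  obtain ⟨p, hp⟩ := hne i
  exact hd.eq (not_disjoint_iff.mpr ⟨_, hπ.mapsTo hp, hτ.mapsTo hp⟩)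

theorem homeo_eq {g h : X ≃ₜ X} {π : Perm ι} (hg : PermutesLevels X U ℓ g π)
    (hh : PermutesLevels X U ℓ h π) : g = h := by
  ext1 p
  by_cases hp : ∃ i, (p : ℤ → A) ∈ shiftSet (ℓ i) U
  · obtain ⟨i, hi⟩ := hp
    exact Subtype.ext ((hg.1 i p hi).trans (hh.1 i p hi).symm)
  · push Not at hp
    rw [hg.2 p hp, hh.2 p hp]

theorem exists_mem_level_of_apply_ne {g : X ≃ₜ X} {π : Perm ι}
    (hg : PermutesLevels X U ℓ g π) {p : X} (hp : g p ≠ p) :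
    ∃ i, (p : ℤ → A) ∈ shiftSet (ℓ i) U := by
  by_contra! h
  exact hp (hg.2 p h)

theorem of_isFOn (hd : Pairwise (Disjoint on fun i => shiftSet (ℓ i) U)) {a b c : ι}
    (ha : ℓ a = ℓ b - 1) (hc : ℓ c = ℓ b + 1) {π : Perm ι} (hπa : π a = b) (hπb : π b = c)
    (hπc : π c = a) (hπ : ∀ i, i ≠ a → i ≠ b → i ≠ c → π i = i) {g : X ≃ₜ X}
    (hg : IsFOn X (shiftSet (ℓ b) U) g) : PermutesLevels X U ℓ g π := by
  have hWa : shiftSet (-1) (shiftSet (ℓ b) U) = shiftSet (ℓ a) U := by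
    rw [shiftSet_shiftSet, ha, neg_add_eq_sub]
  have hWc : shiftSet 1 (shiftSet (ℓ b) U) = shiftSet (ℓ c) U := by
    rw [shiftSet_shiftSet, hc, add_comm]
  simp only [IsFOn, hWa, hWc] at hg
  have hnot {p : X} {i j : ι} (hi : (p : ℤ → A) ∈ shiftSet (ℓ i) U) (hij : i ≠ j) :
      (p : ℤ → A) ∉ shiftSet (ℓ j) U :=
    fun hj => hij (hd.eq (not_disjoint_iff.mpr ⟨p, hi, hj⟩))
  refine ⟨fun i p hp => ?_, fun p hp => (hg p).2.2 ?_⟩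
  · by_cases hia : i = a
    · subst hia
      rw [(hg p).1 (Or.inr hp), hπa, ha, sub_sub_cancel]
    by_cases hib : i = b
    · subst hib
      rw [(hg p).1 (Or.inl hp), hπb, hc, add_sub_cancel_left]
    by_cases hic : i = c
    · subst hic
      rw [(hg p).2.1 hp, hπc, ha, hc]
      ring_nf
    · rw [(hg p).2.2 ?_, hπ i hia hib hic, sub_self, shiftFun_zero]
      rintro ((h | h) | h)
      exacts [hnot hp hib h, hnot hp hia h, hnot hp hic h]
  · rintro ((h | h) | h)
    exacts [hp b h, hp a h, hp c h]

end PermutesLevels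

def permutesLevelsSubgroup (hd : Pairwise (Disjoint on fun i => shiftSet (ℓ i) U)) :
    Subgroup ((X ≃ₜ X) × Perm ι) where
  carrier := {q | PermutesLevels X U ℓ q.1 q.2}
  mul_mem' := PermutesLevels.mul
  one_mem' := PermutesLevels.one
  inv_mem' := PermutesLevels.inv hd

theorem exists_permutesLevels_of_mem_closure
    (hd : Pairwise (Disjoint on fun i => shiftSet (ℓ i) U)) {s : Set (X ≃ₜ X)}
    (hs : ∀ g ∈ s, ∃ π, PermutesLevels X U ℓ g π) {g : X ≃ₜ X} (hg : g ∈ closure s) :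
    ∃ π, PermutesLevels X U ℓ g π := by
  have hle : closure s ≤ (permutesLevelsSubgroup hd).map (MonoidHom.fst _ _) := by
    rw [closure_le]
    intro g hg
    obtain ⟨π, hπ⟩ := hs g hg
    exact ⟨(g, π), hπ, rfl⟩
  obtain ⟨q, hq, rfl⟩ := hle hg
  exact ⟨q.2, hq⟩

theorem nonempty_mulEquiv_closure_of_permutesLevels
    (hd : Pairwise (Disjoint on fun i => shiftSet (ℓ i) U))
    (hne : ∀ i, ∃ p : X, (p : ℤ → A) ∈ shiftSet (ℓ i) U) {κ : Type*} (g : κ → X ≃ₜ X)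
    (π : κ → Perm ι) (h : ∀ k, PermutesLevels X U ℓ (g k) (π k)) :
    Nonempty (closure (range g) ≃* closure (range π)) := by
  set C := closure (range fun k => (g k, π k))
  have hC : C ≤ permutesLevelsSubgroup hd := (closure_le _).mpr (range_subset_iff.mpr h)
  have hfst : InjOn (MonoidHom.fst (X ≃ₜ X) (Perm ι)) C := by
    intro q hq q' hq' (hqq' : q.1 = q'.1)
    refine Prod.ext hqq' ((hC hq).perm_eq hd hne ?_)
    rw [hqq']
    exact hC hq'
  have hsnd : InjOn (MonoidHom.snd (X ≃ₜ X) (Perm ι)) C := by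
    intro q hq q' hq' (hqq' : q.2 = q'.2)
    refine Prod.ext ((hC hq).homeo_eq ?_) hqq'
    rw [hqq']
    exact hC hq'
  obtain ⟨e₁⟩ := nonempty_mulEquiv_closure_range_comp _ _ hfst
  obtain ⟨e₂⟩ := nonempty_mulEquiv_closure_range_comp _ _ hsnd
  exact ⟨e₁.symm.trans e₂⟩

end PermutesLevels

theorem permutesLevels_adjacent_threeCycles {A : Type*} [TopologicalSpace A]
    {X U : Set (ℤ → A)} (hd : Pairwise (Disjoint on fun i : Fin 5 => shiftSet ((i : ℤ) - 2) U))
    {gm g0 gp : X ≃ₜ X} (hgm : IsFOn X (shiftSet (-1) U) gm) (hg0 : IsFOn X U g0)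
    (hgp : IsFOn X (shiftSet 1 U) gp) (k : Fin 3) :
    PermutesLevels X U (fun i : Fin 5 => (i : ℤ) - 2) (![gm, g0, gp] k)
      (![c[0, 1, 2], c[1, 2, 3], c[2, 3, 4]] k) := by
  fin_cases k
  · exact PermutesLevels.of_isFOn hd (a := 0) (b := 1) (c := 2) rfl rfl
      (by decide) (by decide) (by decide) (by decide) hgm
  · refine PermutesLevels.of_isFOn hd (a := 1) (b := 2) (c := 3) rfl rfl
      (by decide) (by decide) (by decide) (by decide) ?_
    rwa [show (((2 : Fin 5) : ℤ) - 2) = 0 from rfl, shiftSet_zero]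
  · exact PermutesLevels.of_isFOn hd (a := 2) (b := 3) (c := 4) rfl rfl
      (by decide) (by decide) (by decide) (by decide) hgp

theorem stmt16_general {A : Type*} [TopologicalSpace A]
    (x : ℤ → A)
    (X : Set (ℤ → A)) (hX : X = closure (Set.range fun n : ℤ => shiftFun n x))
    (m : ℕ)
    (U : Set (ℤ → A)) (hU : IsMCylinder X m U)
    (hdisj : ∀ i j : ℤ, -2 ≤ i → i ≤ 2 → -2 ≤ j → j ≤ 2 → i ≠ j →
      Disjoint (shiftSet i U) (shiftSet j U))
    (gm g0 gp : ↥X ≃ₜ ↥X)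
    (hgm : IsFOn X (shiftSet (-1) U) gm) (hg0 : IsFOn X U g0)
    (hgp : IsFOn X (shiftSet 1 U) gp) :
    Nonempty (↥(Subgroup.closure {gm, g0, gp}) ≃* ↥(alternatingGroup (Fin 5))) ∧
    (∀ g ∈ Subgroup.closure {gm, g0, gp}, ∀ p : ↥X, g p ≠ p →
      ∃ i : ℤ, -2 ≤ i ∧ i ≤ 2 ∧ (p : ℤ → A) ∈ shiftSet i U) := by
  set ℓ : Fin 5 → ℤ := fun i => (i : ℤ) - 2
  have hℓ (i : Fin 5) : -2 ≤ ℓ i ∧ ℓ i ≤ 2 := by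
    simp only [ℓ]
    omega
  have hd : Pairwise (Disjoint on fun i => shiftSet (ℓ i) U) := fun i j hij =>
    hdisj _ _ (hℓ i).1 (hℓ i).2 (hℓ j).1 (hℓ j).2 (by simpa [ℓ, Fin.val_inj] using hij)
  have hUX : U ⊆ X := by
    obtain ⟨⟨u, rfl⟩, -⟩ := hU
    exact inter_subset_left
  have hne (i : Fin 5) : ∃ p : X, (p : ℤ → A) ∈ shiftSet (ℓ i) U := by
    obtain ⟨u, hu⟩ := hU.2
    exact ⟨⟨_, hX ▸ mapsTo_shiftFun_closure_orbit x (ℓ i) (hX ▸ hUX hu)⟩, u, hu, rfl⟩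
  have hgen := permutesLevels_adjacent_threeCycles hd hgm hg0 hgp
  have hgens : ({gm, g0, gp} : Set (X ≃ₜ X)) = range ![gm, g0, gp] := by
    simp only [Matrix.range_cons, Matrix.range_empty, union_empty, singleton_union]
  refine ⟨?_, fun g hg p hp => ?_⟩
  · obtain ⟨e⟩ := nonempty_mulEquiv_closure_of_permutesLevels hd hne _ _ hgen
    refine ⟨(MulEquiv.subgroupCongr (by rw [hgens])).trans (e.trans (MulEquiv.subgroupCongr ?_))⟩
    rw [← closure_threeCycles_eq_alternatingGroup_five]
    simp only [Matrix.range_cons, Matrix.range_empty, union_empty, singleton_union]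
  · rw [hgens] at hg
    obtain ⟨π, hπ⟩ := exists_permutesLevels_of_mem_closure hd
      (forall_mem_range.mpr fun k => ⟨_, hgen k⟩) hg
    obtain ⟨i, hi⟩ := hπ.exists_mem_level_of_apply_ne hp
    exact ⟨ℓ i, (hℓ i).1, (hℓ i).2, hi⟩

/-- for an `m`-cylinder `U` (with `m ≥ max{(R_x(4)−1)/2, 5}`) whose five
shifts `σ^i(U)`, `−2 ≤ i ≤ 2`, are pairwise disjoint, the subgroup
`Δ_U = ⟨f_{σ⁻¹(U)}, f_U, f_{σ(U)}⟩` is isomorphic to `Alt(5)`, and each of its elements is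
supported on `⋃_{−2 ≤ i ≤ 2} σ^i(U)`. -/
theorem stmt16 {A : Type*} [Fintype A] [TopologicalSpace A] [DiscreteTopology A]
    (x : ℤ → A) (hUR : UniformlyRecurrent x) (hNP : ¬ PeriodicWord x)
    (X : Set (ℤ → A)) (hX : X = closure (Set.range fun n : ℤ => shiftFun n x))
    (m : ℕ) (hm5 : 5 ≤ m) (hmR : recurrenceFn x 4 ≤ 2 * m + 1)
    (U : Set (ℤ → A)) (hU : IsMCylinder X m U)
    (hdisj : ∀ i j : ℤ, -2 ≤ i → i ≤ 2 → -2 ≤ j → j ≤ 2 → i ≠ j →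
      Disjoint (shiftSet i U) (shiftSet j U))
    (gm g0 gp : ↥X ≃ₜ ↥X)
    (hgm : IsFOn X (shiftSet (-1) U) gm) (hg0 : IsFOn X U g0)
    (hgp : IsFOn X (shiftSet 1 U) gp) :
    Nonempty (↥(Subgroup.closure {gm, g0, gp}) ≃* ↥(alternatingGroup (Fin 5))) ∧
    (∀ g ∈ Subgroup.closure {gm, g0, gp}, ∀ p : ↥X, g p ≠ p →
      ∃ i : ℤ, -2 ≤ i ∧ i ≤ 2 ∧ (p : ℤ → A) ∈ shiftSet i U) :=
  stmt16_general x X hX m U hU hdisj gm g0 gp hgm hg0 hgp
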